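/- arXiv:2201.06714 — 7 statements merged into one kernel-verified Lean document; each statement's English description precedes it below -/
import Mathlib

section
/- Let d ≥ 1, T ≥ 1, 0 < τ̲ ≤ 1, let g_1,…,g_T ∈ ℝ^d, let τ_1,…,τ_{T+1} ∈ [τ̲, 1], and let m_0 = 0, m_t = (1 − τ_t) m_{t−1} + τ_t g_t. Let v̂_1,…,v̂_{T−1} ∈ ℝ^d have strictly positive coordinates, let α_1,…,α_{T−1} > 0, and suppose the iterates satisfy θ_{t+1,i} = θ_{t,i} − α_t v̂_{t,i}^{−1/2} m_{t,i} for 1 ≤ t ≤ T−1 and all i. Then Σ_{t=1}^{T} ((1 − τ_t)/τ_t) ⟨m_{t−1}, θ_{t−1} − θ_t⟩ ≤ ((1 − τ̲)/τ̲) Σ_{t=1}^{T−1} α_t Σ_i m_{t,i}² v̂_{t,i}^{−1/2}. -/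
/-!
In every summand the update rule turns `⟨m_{t-1}, θ_{t-1} - θ_t⟩` into
`α_{t-1} Σ_i m_{t-1,i}² v̂_{t-1,i}^{-1/2} ≥ 0` (for `t = 1` it vanishes because `m_0 = 0`), and
`(1 - τ)/τ = τ⁻¹ - 1` is antitone in `τ > 0`, so it is at most `(1 - τ̲)/τ̲`. Shifting the index
`t ↦ t - 1` gives the bound.
-/

open Finset

lemma Finset.sum_Icc_one_eq_add_sum_Icc_succ {M : Type*} [AddCommMonoid M] (f : ℕ → M) {T : ℕ}
    (hT : 1 ≤ T) : ∑ t ∈ Icc 1 T, f t = f 1 + ∑ t ∈ Icc 1 (T - 1), f (t + 1) := by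
  rw [← insert_Icc_add_one_left_eq_Icc hT, sum_insert (by simp)]
  congr 1
  rw [← Nat.sub_add_cancel hT, Nat.add_sub_cancel, ← map_add_right_Icc, sum_map]
  rfl

lemma one_sub_div_self_le_of_le {x y : ℝ} (hy : 0 < y) (hyx : y ≤ x) :
    (1 - x) / x ≤ (1 - y) / y := by
  rw [sub_div, sub_div, div_self (hy.trans_le hyx).ne', div_self hy.ne']
  gcongr

lemma sum_mul_sub_eq_of_forall_eq_sub {ι : Type*} [Fintype ι] {m θ θ' w : ι → ℝ} (a : ℝ)
    (hθ' : ∀ i, θ' i = θ i - a * w i * m i) :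
    ∑ i, m i * (θ i - θ' i) = a * ∑ i, m i ^ 2 * w i := by
  simp only [hθ', mul_sum]
  exact sum_congr rfl fun i _ ↦ by ring

theorem adaterm_R2_bound_general
    (d T : ℕ) (hT : 1 ≤ T)
    (τlo : ℝ) (hτlo0 : 0 < τlo)
    (τ : ℕ → ℝ)
    (hτ : ∀ t, 1 ≤ t → t ≤ T + 1 → τlo ≤ τ t ∧ τ t ≤ 1)
    (m : ℕ → Fin d → ℝ) (hm0 : m 0 = 0)
    (v : ℕ → Fin d → ℝ)
    (a : ℕ → ℝ) (ha : ∀ t, 1 ≤ t → t ≤ T - 1 → 0 < a t)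
    (θ : ℕ → Fin d → ℝ)
    (hθ : ∀ t, 1 ≤ t → t ≤ T - 1 → ∀ i,
      θ (t + 1) i = θ t i - a t * (Real.sqrt (v t i))⁻¹ * m t i) :
    ∑ t ∈ Finset.Icc 1 T, (1 - τ t) / τ t * ∑ i, m (t - 1) i * (θ (t - 1) i - θ t i)
      ≤ (1 - τlo) / τlo
        * ∑ t ∈ Finset.Icc 1 (T - 1), a t * ∑ i, (m t i) ^ 2 * (Real.sqrt (v t i))⁻¹ := by
  rw [sum_Icc_one_eq_add_sum_Icc_succ _ hT, Nat.sub_self, hm0, mul_sum (Icc 1 (T - 1))]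
  simp only [Pi.zero_apply, zero_mul, sum_const_zero, mul_zero, zero_add, Nat.add_sub_cancel]
  refine Finset.sum_le_sum fun t ht ↦ ?_
  obtain ⟨ht1, htT⟩ := mem_Icc.mp ht
  rw [sum_mul_sub_eq_of_forall_eq_sub (a t) (hθ t ht1 htT)]
  have hstep_nonneg : 0 ≤ a t * ∑ i, m t i ^ 2 * (Real.sqrt (v t i))⁻¹ :=
    mul_nonneg (ha t ht1 htT).le (sum_nonneg fun i _ ↦ by positivity)
  exact mul_le_mul_of_nonneg_right
    (one_sub_div_self_le_of_le hτlo0 (hτ (t + 1) (by omega) (by omega)).1) hstep_nonneg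

/-- Bound of the term `R_{2,T}` in the AdaTerm regret analysis (no projection step). -/
theorem adaterm_R2_bound
    (d T : ℕ) (hd : 1 ≤ d) (hT : 1 ≤ T)
    (τlo : ℝ) (hτlo0 : 0 < τlo) (hτlo1 : τlo ≤ 1)
    (g : ℕ → Fin d → ℝ) (τ : ℕ → ℝ)
    (hτ : ∀ t, 1 ≤ t → t ≤ T + 1 → τlo ≤ τ t ∧ τ t ≤ 1)
    (m : ℕ → Fin d → ℝ) (hm0 : m 0 = 0)
    (hm : ∀ t, 1 ≤ t → t ≤ T → ∀ i, m t i = (1 - τ t) * m (t - 1) i + τ t * g t i)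
    (v : ℕ → Fin d → ℝ) (hv : ∀ t, 1 ≤ t → t ≤ T - 1 → ∀ i, 0 < v t i)
    (a : ℕ → ℝ) (ha : ∀ t, 1 ≤ t → t ≤ T - 1 → 0 < a t)
    (θ : ℕ → Fin d → ℝ)
    (hθ : ∀ t, 1 ≤ t → t ≤ T - 1 → ∀ i,
      θ (t + 1) i = θ t i - a t * (Real.sqrt (v t i))⁻¹ * m t i) :
    ∑ t ∈ Finset.Icc 1 T, (1 - τ t) / τ t * ∑ i, m (t - 1) i * (θ (t - 1) i - θ t i)
      ≤ (1 - τlo) / τlo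
        * ∑ t ∈ Finset.Icc 1 (T - 1), a t * ∑ i, (m t i) ^ 2 * (Real.sqrt (v t i))⁻¹ :=
  adaterm_R2_bound_general d T hT τlo hτlo0 τ hτ m hm0 v a ha θ hθ
end

section
/- Let d ≥ 1, T ≥ 1, let 0 < β < 1 and 0 < τ̲ ≤ 1 − β, let g_1,…,g_T ∈ ℝ^d, let τ_0, τ_1,…,τ_T ∈ [τ̲, 1 − β], and let m_0 = 0, m_t = (1 − τ_t) m_{t−1} + τ_t g_t. Let θ_1,…,θ_T, θ* ∈ ℝ^d, D ≥ 0 with |θ_{t,i} − θ*_i| ≤ D for all t and i, let v_1,…,v_{T−1} ∈ ℝ^d have strictly positive coordinates, and let α_1,…,α_{T−1} > 0. Then Σ_{t=1}^{T} (1/τ_t) ( ⟨m_t, θ_t − θ*⟩ − ⟨m_{t−1}, θ_{t−1} − θ*⟩ ) ≤ (1/τ_T) ⟨m_T, θ_T − θ*⟩ + ((1 − (β + τ̲))/(2 τ̲²)) ( Σ_{t=1}^{T−1} (D²/α_t) Σ_i v_{t,i}^{1/2} + Σ_{t=1}^{T−1} α_t Σ_i m_{t,i}² v_{t,i}^{−1/2}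 ). -/
/-!
Writing `S t = ⟨m t, θ t - θ*⟩`, summation by parts (using `S 0 = 0`) turns the left-hand side
into `S T / τ T + ∑_{1 ≤ t < T} (1 / τ t - 1 / τ (t + 1)) S t`. Since all `τ t` lie in `[τ̲, 1 - β]`,
`|1 / τ t - 1 / τ (t + 1)| ≤ (1 - β - τ̲) / τ̲²`, and Young's inequality coordinatewise gives
`2 |S t| ≤ D² / α t ∑ √(v t i) + α t ∑ (m t i)² / √(v t i)`.
-/

lemma abs_inv_sub_inv_le_of_mem_Icc {l u x y : ℝ} (hl : 0 < l)
    (hx : x ∈ Set.Icc l u) (hy : y ∈ Set.Icc l u) :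
    |x⁻¹ - y⁻¹| ≤ (u - l) / l ^ 2 := by
  obtain ⟨hlx, hxu⟩ := hx
  obtain ⟨hly, hyu⟩ := hy
  have hx0 : 0 < x := hl.trans_le hlx
  have hy0 : 0 < y := hl.trans_le hly
  rw [inv_sub_inv hx0.ne' hy0.ne', abs_div, abs_of_pos (mul_pos hx0 hy0), sq]
  exact div_le_div₀ (by linarith) (abs_le.2 ⟨by linarith, by linarith⟩) (by positivity)
    (mul_le_mul hlx hly hl.le hx0.le)

lemma two_mul_abs_mul_le {x y s a D : ℝ} (hs : 0 < s) (ha : 0 < a) (hy : |y| ≤ D) :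
    2 * |x * y| ≤ D ^ 2 / a * s + a * x ^ 2 * s⁻¹ := by
  have hyD : y ^ 2 ≤ D ^ 2 := sq_le_sq' (abs_le.1 hy).1 (abs_le.1 hy).2
  have young : 2 * |x * y| ≤ y ^ 2 / a * s + a * x ^ 2 * s⁻¹ := by
    have hsq : 0 ≤ (a * |x| - |y| * s) ^ 2 / (a * s) := by positivity
    have expand : (a * |x| - |y| * s) ^ 2 / (a * s)
        = y ^ 2 / a * s + a * x ^ 2 * s⁻¹ - 2 * |x * y| := by
      rw [abs_mul, ← sq_abs x, ← sq_abs y]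
      field_simp
      ring
    linarith
  have : y ^ 2 / a * s ≤ D ^ 2 / a * s := by gcongr
  linarith

lemma two_mul_abs_sum_mul_le {ι : Type*} [Fintype ι] {x y s : ι → ℝ} {a D : ℝ}
    (hs : ∀ i, 0 < s i) (ha : 0 < a) (hy : ∀ i, |y i| ≤ D) :
    2 * |∑ i, x i * y i| ≤ D ^ 2 / a * ∑ i, s i + a * ∑ i, x i ^ 2 * (s i)⁻¹ := by
  calc 2 * |∑ i, x i * y i| ≤ ∑ i, 2 * |x i * y i| := by
        rw [← Finset.mul_sum]; gcongr; exact Finset.abs_sum_le_sum_abs _ _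
    _ ≤ ∑ i, (D ^ 2 / a * s i + a * x i ^ 2 * (s i)⁻¹) :=
        Finset.sum_le_sum fun i _ => two_mul_abs_mul_le (hs i) ha (hy i)
    _ = D ^ 2 / a * ∑ i, s i + a * ∑ i, x i ^ 2 * (s i)⁻¹ := by
        simp only [Finset.sum_add_distrib, Finset.mul_sum, mul_assoc]

lemma sum_Icc_mul_sub_by_parts_of_eq_zero {w S : ℕ → ℝ} (hS : S 0 = 0) (T : ℕ) :
    ∑ t ∈ Finset.Icc 1 T, w t * (S t - S (t - 1))
      = w T * S T + ∑ t ∈ Finset.Icc 1 (T - 1), (w t - w (t + 1)) * S t := by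
  induction T with
  | zero => simp [hS]
  | succ n ih =>
    rw [Finset.sum_Icc_succ_top (by omega), ih, Nat.add_sub_cancel]
    rcases n with _ | k
    · simp [hS]
    · rw [Finset.sum_Icc_succ_top (by omega : 1 ≤ k + 1), Nat.add_sub_cancel]
      ring

theorem adaterm_R3_bound_general
    (d T : ℕ)
    (β τlo : ℝ) (hτlo0 : 0 < τlo)
    (τ : ℕ → ℝ)
    (hτ : ∀ t, t ≤ T → τlo ≤ τ t ∧ τ t ≤ 1 - β)
    (m : ℕ → Fin d → ℝ) (hm0 : m 0 = 0)
    (θ : ℕ → Fin d → ℝ) (θs : Fin d → ℝ) (D : ℝ)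
    (hθ : ∀ t, 1 ≤ t → t ≤ T → ∀ i, |θ t i - θs i| ≤ D)
    (v : ℕ → Fin d → ℝ) (hv : ∀ t, 1 ≤ t → t ≤ T - 1 → ∀ i, 0 < v t i)
    (a : ℕ → ℝ) (ha : ∀ t, 1 ≤ t → t ≤ T - 1 → 0 < a t) :
    ∑ t ∈ Finset.Icc 1 T,
        (1 / τ t) * ((∑ i, m t i * (θ t i - θs i))
          - ∑ i, m (t - 1) i * (θ (t - 1) i - θs i))
      ≤ (1 / τ T) * ∑ i, m T i * (θ T i - θs i)
        + (1 - (β + τlo)) / (2 * τlo ^ 2)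
          * ((∑ t ∈ Finset.Icc 1 (T - 1), D ^ 2 / a t * ∑ i, Real.sqrt (v t i))
            + ∑ t ∈ Finset.Icc 1 (T - 1), a t * ∑ i, (m t i) ^ 2 * (Real.sqrt (v t i))⁻¹) := by
  rw [sum_Icc_mul_sub_by_parts_of_eq_zero (S := fun t => ∑ i, m t i * (θ t i - θs i))
      (by simp [hm0]),
    ← Finset.sum_add_distrib, Finset.mul_sum _ _ ((1 - (β + τlo)) / (2 * τlo ^ 2))]
  gcongr _ + ?_
  refine Finset.sum_le_sum fun t ht => ?_
  obtain ⟨ht1, htT⟩ := Finset.mem_Icc.1 ht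
  have hΔ : |(τ t)⁻¹ - (τ (t + 1))⁻¹| ≤ (1 - β - τlo) / τlo ^ 2 :=
    abs_inv_sub_inv_le_of_mem_Icc hτlo0 (hτ t (by omega)) (hτ (t + 1) (by omega))
  have hS := two_mul_abs_sum_mul_le (x := m t) (fun i => Real.sqrt_pos.2 (hv t ht1 htT i))
    (ha t ht1 htT) (hθ t ht1 (by omega))
  calc (1 / τ t - 1 / τ (t + 1)) * ∑ i, m t i * (θ t i - θs i)
      ≤ |(τ t)⁻¹ - (τ (t + 1))⁻¹| * |∑ i, m t i * (θ t i - θs i)| := by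
        rw [one_div, one_div, ← abs_mul]; exact le_abs_self _
    _ ≤ (1 - β - τlo) / τlo ^ 2 * ((D ^ 2 / a t * ∑ i, Real.sqrt (v t i)
          + a t * ∑ i, m t i ^ 2 * (Real.sqrt (v t i))⁻¹) / 2) :=
        mul_le_mul hΔ (by linarith) (abs_nonneg _) ((abs_nonneg _).trans hΔ)
    _ = _ := by ring

/-- Bound of the term `R_{3,T}` in the AdaTerm regret analysis. -/
theorem adaterm_R3_bound
    (d T : ℕ) (hd : 1 ≤ d) (hT : 1 ≤ T)
    (β τlo : ℝ) (hβ0 : 0 < β) (hβ1 : β < 1) (hτlo0 : 0 < τlo) (hτloβ : τlo ≤ 1 - β)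
    (g : ℕ → Fin d → ℝ) (τ : ℕ → ℝ)
    (hτ : ∀ t, t ≤ T → τlo ≤ τ t ∧ τ t ≤ 1 - β)
    (m : ℕ → Fin d → ℝ) (hm0 : m 0 = 0)
    (hm : ∀ t, 1 ≤ t → t ≤ T → ∀ i, m t i = (1 - τ t) * m (t - 1) i + τ t * g t i)
    (θ : ℕ → Fin d → ℝ) (θs : Fin d → ℝ) (D : ℝ) (hD : 0 ≤ D)
    (hθ : ∀ t, 1 ≤ t → t ≤ T → ∀ i, |θ t i - θs i| ≤ D)
    (v : ℕ → Fin d → ℝ) (hv : ∀ t, 1 ≤ t → t ≤ T - 1 → ∀ i, 0 < v t i)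
    (a : ℕ → ℝ) (ha : ∀ t, 1 ≤ t → t ≤ T - 1 → 0 < a t) :
    ∑ t ∈ Finset.Icc 1 T,
        (1 / τ t) * ((∑ i, m t i * (θ t i - θs i))
          - ∑ i, m (t - 1) i * (θ (t - 1) i - θs i))
      ≤ (1 / τ T) * ∑ i, m T i * (θ T i - θs i)
        + (1 - (β + τlo)) / (2 * τlo ^ 2)
          * ((∑ t ∈ Finset.Icc 1 (T - 1), D ^ 2 / a t * ∑ i, Real.sqrt (v t i))
            + ∑ t ∈ Finset.Icc 1 (T - 1), a t * ∑ i, (m t i) ^ 2 * (Real.sqrt (v t i))⁻¹) :=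
  adaterm_R3_bound_general d T β τlo hτlo0 τ hτ m hm0 θ θs D hθ v hv a ha
end

section
/- Let d ≥ 1, T ≥ 1, let 0 < β < 1 and 0 < τ̲ ≤ 1 − β, let g_1,…,g_T ∈ ℝ^d, let τ_1,…,τ_T ∈ [τ̲, 1 − β], and let m_0 = 0, m_t = (1 − τ_t) m_{t−1} + τ_t g_t. Then for every 1 ≤ t ≤ T and every coordinate i: m_{t,i}² ≤ ((1 − β)²/τ̲) Σ_{k=1}^{t} (1 − τ̲)^{t−k} g_{k,i}². -/
/-!
Each step of the recursion is a convex combination, so by convexity of `x ↦ x²`,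
`m_t² ≤ (1 - τ_t) m_{t-1}² + τ_t g_t²`. Since `τ̲ ≤ τ_t ≤ 1 - β`, induction on `t` gives the
sharper bound `m_t² ≤ (1 - β) Σ_{k ≤ t} (1 - τ̲)^{t-k} g_k²`, and `1 - β ≤ (1 - β)² / τ̲`
because `τ̲ ≤ 1 - β`.
-/

open Finset

lemma sq_one_sub_mul_add_mul_le {a : ℝ} (x y : ℝ) (ha₀ : 0 ≤ a) (ha₁ : a ≤ 1) :
    ((1 - a) * x + a * y) ^ 2 ≤ (1 - a) * x ^ 2 + a * y ^ 2 := by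
  have gap : (1 - a) * x ^ 2 + a * y ^ 2 - ((1 - a) * x + a * y) ^ 2 =
      a * (1 - a) * (x - y) ^ 2 := by
    ring
  linarith [mul_nonneg (mul_nonneg ha₀ (sub_nonneg.2 ha₁)) (sq_nonneg (x - y))]

def discountedSqSum (ρ : ℝ) (y : ℕ → ℝ) (t : ℕ) : ℝ :=
  ∑ k ∈ Icc 1 t, ρ ^ (t - k) * y k ^ 2

namespace discountedSqSum

variable {ρ : ℝ} {y : ℕ → ℝ}

@[simp]
lemma zero : discountedSqSum ρ y 0 = 0 := by
  simp [discountedSqSum]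

lemma succ (t : ℕ) :
    discountedSqSum ρ y (t + 1) = ρ * discountedSqSum ρ y t + y (t + 1) ^ 2 := by
  rw [discountedSqSum, sum_Icc_succ_top (by omega), discountedSqSum, mul_sum, Nat.sub_self,
    pow_zero, one_mul]
  congr 1
  refine sum_congr rfl fun k hk => ?_
  rw [Nat.sub_add_comm (mem_Icc.1 hk).2, pow_succ]
  ring

lemma nonneg (hρ : 0 ≤ ρ) (t : ℕ) : 0 ≤ discountedSqSum ρ y t :=
  sum_nonneg fun _ _ => by positivity

end discountedSqSum

theorem sq_le_of_ema_rec {T : ℕ} {τlo c : ℝ} {τ x y : ℕ → ℝ} (hτlo : 0 ≤ τlo) (hc : c ≤ 1)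
    (hτ : ∀ t, 1 ≤ t → t ≤ T → τlo ≤ τ t ∧ τ t ≤ c) (hx₀ : x 0 = 0)
    (hx : ∀ t, 1 ≤ t → t ≤ T → x t = (1 - τ t) * x (t - 1) + τ t * y t) :
    ∀ t ≤ T, x t ^ 2 ≤ c * discountedSqSum (1 - τlo) y t := by
  intro t
  induction t with
  | zero => simp [hx₀]
  | succ t ih =>
    intro ht
    obtain ⟨hτlo_le, hτ_le⟩ := hτ (t + 1) (by omega) ht
    have hS := discountedSqSum.nonneg (y := y) (by linarith : 0 ≤ 1 - τlo) t
    have hc₀ : 0 ≤ c := by linarith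
    calc x (t + 1) ^ 2
        ≤ (1 - τ (t + 1)) * x t ^ 2 + τ (t + 1) * y (t + 1) ^ 2 := by
          rw [hx (t + 1) (by omega) ht, Nat.add_sub_cancel]
          exact sq_one_sub_mul_add_mul_le _ _ (by linarith) (by linarith)
      _ ≤ (1 - τlo) * (c * discountedSqSum (1 - τlo) y t) + c * y (t + 1) ^ 2 := by
          gcongr
          · linarith
          · exact ih (by omega)
      _ = c * discountedSqSum (1 - τlo) y (t + 1) := by
          rw [discountedSqSum.succ]
          ring

theorem adaterm_momentum_sq_bound_general
    (d T : ℕ)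
    (β τlo : ℝ) (hβ0 : 0 < β) (hτlo0 : 0 < τlo) (hτloβ : τlo ≤ 1 - β)
    (g : ℕ → Fin d → ℝ) (τ : ℕ → ℝ)
    (hτ : ∀ t, 1 ≤ t → t ≤ T → τlo ≤ τ t ∧ τ t ≤ 1 - β)
    (m : ℕ → Fin d → ℝ) (hm0 : m 0 = 0)
    (hm : ∀ t, 1 ≤ t → t ≤ T → ∀ i, m t i = (1 - τ t) * m (t - 1) i + τ t * g t i) :
    ∀ t, 1 ≤ t → t ≤ T → ∀ i,
      (m t i) ^ 2
        ≤ (1 - β) ^ 2 / τlo * ∑ k ∈ Finset.Icc 1 t, (1 - τlo) ^ (t - k) * (g k i) ^ 2 := by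
  intro t _ ht i
  have hsharp := sq_le_of_ema_rec (x := fun t => m t i) (y := fun t => g t i) hτlo0.le
    (by linarith) hτ (by simp [hm0]) (fun t h₁ h₂ => hm t h₁ h₂ i) t ht
  have hS := discountedSqSum.nonneg (y := fun t => g t i) (by linarith : 0 ≤ 1 - τlo) t
  have hconst : 1 - β ≤ (1 - β) ^ 2 / τlo := by
    rw [le_div_iff₀ hτlo0, sq]
    exact mul_le_mul_of_nonneg_left hτloβ (by linarith)
  exact hsharp.trans (mul_le_mul_of_nonneg_right hconst hS)

/-- Coordinatewise squared-momentum bound in the AdaTerm regret analysis: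
`m_{t,i}² ≤ ((1-β)²/τ̲) Σ_{k=1}^{t} (1-τ̲)^{t-k} g_{k,i}²`. -/
theorem adaterm_momentum_sq_bound
    (d T : ℕ) (hd : 1 ≤ d) (hT : 1 ≤ T)
    (β τlo : ℝ) (hβ0 : 0 < β) (hβ1 : β < 1) (hτlo0 : 0 < τlo) (hτloβ : τlo ≤ 1 - β)
    (g : ℕ → Fin d → ℝ) (τ : ℕ → ℝ)
    (hτ : ∀ t, 1 ≤ t → t ≤ T → τlo ≤ τ t ∧ τ t ≤ 1 - β)
    (m : ℕ → Fin d → ℝ) (hm0 : m 0 = 0)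
    (hm : ∀ t, 1 ≤ t → t ≤ T → ∀ i, m t i = (1 - τ t) * m (t - 1) i + τ t * g t i) :
    ∀ t, 1 ≤ t → t ≤ T → ∀ i,
      (m t i) ^ 2
        ≤ (1 - β) ^ 2 / τlo * ∑ k ∈ Finset.Icc 1 t, (1 - τlo) ^ (t - k) * (g k i) ^ 2 :=
  adaterm_momentum_sq_bound_general d T β τlo hβ0 hτlo0 hτloβ g τ hτ m hm0 hm
end

section
/- Let d ≥ 1, T ≥ 2, let 0 < β < 1, 0 < τ̲ ≤ 1 − β, ε > 0, α > 0, and let α_t = α/√t. Let g_1,…,g_{T−1} ∈ ℝ^d, let τ_1,…,τ_{T−1} ∈ [τ̲, 1 − β], let m_0 = 0, m_t = (1 − τ_t) m_{t−1} + τ_t g_t, and let v̂_1,…,v̂_{T−1} ∈ ℝ^d satisfy v̂_{t,i} ≥ ε² for all t, i. Then Σ_{t=1}^{T−1} α_t Σ_i m_{t,i}² v̂_{t,i}^{−1/2} ≤ (α (1 − β)²/(ε τ̲²)) · sqrt(1 + log(T − 1)) · Σ_{i=1}^{d} sqrt( Σ_{t=1}^{T−1} g_{t,i}⁴ ). -/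
/-!
Coordinatewise, convexity of `x ↦ x²` turns the momentum recursion into
`m_t² ≤ (1 - τ̲) m_{t-1}² + (1 - β) g_t²`. Summed against the decreasing weights `1/√t` this gives
`τ̲ ∑ m_t²/√t ≤ (1 - β) ∑ g_t²/√t`, and Cauchy–Schwarz with `∑_{t ≤ N} 1/t ≤ 1 + log N` bounds the
right-hand side. Finally `v̂ ≥ ε²` contributes `1/ε`, and the factor `(1 - β)/τ̲ ≥ 1` is weakened
to its square.
-/

open Finset

theorem sq_lerp_le {τ : ℝ} (h₀ : 0 ≤ τ) (h₁ : τ ≤ 1) (a b : ℝ) :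
    ((1 - τ) * a + τ * b) ^ 2 ≤ (1 - τ) * a ^ 2 + τ * b ^ 2 := by
  nlinarith [mul_nonneg (mul_nonneg h₀ (sub_nonneg.2 h₁)) (sq_nonneg (a - b))]

theorem antitoneOn_inv_sqrt_natCast : AntitoneOn (fun t : ℕ => (√(t : ℝ))⁻¹) (Set.Ici 1) := by
  intro s hs t _ hst
  have hs : (0 : ℝ) < √s := Real.sqrt_pos.2 (Nat.cast_pos.2 hs)
  exact inv_anti₀ hs (Real.sqrt_le_sqrt (by exact_mod_cast hst))

/- Since `w` is antitone, `∑ w t * u (t - 1) ≤ ∑ w t * u t`, so the recursion can be summed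
without unrolling it; `r * (w n * u n)` is the boundary term of that shift. -/
theorem one_sub_mul_sum_mul_le_of_le_mul_add {r : ℝ} (hr : 0 ≤ r) {N : ℕ} {u a w : ℕ → ℝ}
    (hu₀ : u 0 = 0) (hu : ∀ t, 0 ≤ u t) (hw : ∀ t, 0 ≤ w t) (hw_anti : AntitoneOn w (Set.Ici 1))
    (hrec : ∀ t ∈ Icc 1 N, u t ≤ r * u (t - 1) + a t) :
    (1 - r) * ∑ t ∈ Icc 1 N, w t * u t ≤ ∑ t ∈ Icc 1 N, w t * a t := by
  suffices key : ∀ n ≤ N,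
      (1 - r) * ∑ t ∈ Icc 1 n, w t * u t + r * (w n * u n) ≤ ∑ t ∈ Icc 1 n, w t * a t by
    nlinarith [key N le_rfl, mul_nonneg hr (mul_nonneg (hw N) (hu N))]
  intro n hn
  induction n with
  | zero => simp [hu₀]
  | succ n ih =>
    have hshift : w (n + 1) * u n ≤ w n * u n := by
      rcases n.eq_zero_or_pos with rfl | hn₀
      · simp [hu₀]
      · exact mul_le_mul_of_nonneg_right
          (hw_anti (Set.mem_Ici.2 hn₀) (Set.mem_Ici.2 (by omega)) n.le_succ) (hu n)
    have hstep := hrec (n + 1) (mem_Icc.2 ⟨by omega, hn⟩)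
    rw [Nat.add_sub_cancel] at hstep
    rw [sum_Icc_succ_top (by omega), sum_Icc_succ_top (by omega)]
    nlinarith [ih (by omega), mul_le_mul_of_nonneg_left hstep (hw (n + 1)),
      mul_le_mul_of_nonneg_left hshift hr]

theorem mul_sum_mul_sq_momentum_le {τlo c : ℝ} (hτlo : 0 ≤ τlo) (hτlo_c : τlo ≤ c) (hc : c ≤ 1)
    {N : ℕ} {m g τ w : ℕ → ℝ} (hm₀ : m 0 = 0) (hτ : ∀ t ∈ Icc 1 N, τlo ≤ τ t ∧ τ t ≤ c)
    (hm : ∀ t ∈ Icc 1 N, m t = (1 - τ t) * m (t - 1) + τ t * g t)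
    (hw : ∀ t, 0 ≤ w t) (hw_anti : AntitoneOn w (Set.Ici 1)) :
    τlo * ∑ t ∈ Icc 1 N, w t * m t ^ 2 ≤ c * ∑ t ∈ Icc 1 N, w t * g t ^ 2 := by
  have hrec : ∀ t ∈ Icc 1 N, m t ^ 2 ≤ (1 - τlo) * m (t - 1) ^ 2 + c * g t ^ 2 := by
    intro t ht
    obtain ⟨hlo, hhi⟩ := hτ t ht
    rw [hm t ht]
    calc _ ≤ (1 - τ t) * m (t - 1) ^ 2 + τ t * g t ^ 2 :=
          sq_lerp_le (by linarith) (by linarith) _ _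
      _ ≤ (1 - τlo) * m (t - 1) ^ 2 + c * g t ^ 2 := by gcongr
  have := one_sub_mul_sum_mul_le_of_le_mul_add (by linarith) (u := fun t => m t ^ 2)
    (a := fun t => c * g t ^ 2) (by simp [hm₀]) (fun t => sq_nonneg _) hw hw_anti hrec
  simpa [mul_sum, mul_left_comm] using this

theorem sum_Icc_inv_sqrt_mul_sq_le (N : ℕ) (b : ℕ → ℝ) :
    ∑ t ∈ Icc 1 N, (√(t : ℝ))⁻¹ * b t ^ 2 ≤ √(1 + Real.log N) * √(∑ t ∈ Icc 1 N, b t ^ 4) := by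
  simp_rw [show ∀ t, b t ^ 4 = (b t ^ 2) ^ 2 from fun t => by ring]
  refine (Real.sum_mul_le_sqrt_mul_sqrt _ _ _).trans ?_
  gcongr
  calc ∑ t ∈ Icc 1 N, ((√(t : ℝ))⁻¹) ^ 2 = harmonic N := by
        simp [harmonic_eq_sum_Icc]
    _ ≤ 1 + Real.log N := harmonic_le_one_add_log N

theorem adaterm_momentum_norm_sum_bound_general
    (d T : ℕ)
    (β τlo ε α : ℝ) (hβ0 : 0 < β)
    (hτlo0 : 0 < τlo) (hτloβ : τlo ≤ 1 - β) (hε : 0 < ε) (hα : 0 < α)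
    (g : ℕ → Fin d → ℝ) (τ : ℕ → ℝ)
    (hτ : ∀ t, 1 ≤ t → t ≤ T - 1 → τlo ≤ τ t ∧ τ t ≤ 1 - β)
    (m : ℕ → Fin d → ℝ) (hm0 : m 0 = 0)
    (hm : ∀ t, 1 ≤ t → t ≤ T - 1 → ∀ i, m t i = (1 - τ t) * m (t - 1) i + τ t * g t i)
    (v : ℕ → Fin d → ℝ) (hv : ∀ t, 1 ≤ t → t ≤ T - 1 → ∀ i, ε ^ 2 ≤ v t i) :
    ∑ t ∈ Finset.Icc 1 (T - 1),
        (α / Real.sqrt t) * ∑ i, (m t i) ^ 2 * (Real.sqrt (v t i))⁻¹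
      ≤ α * (1 - β) ^ 2 / (ε * τlo ^ 2) * Real.sqrt (1 + Real.log ((T : ℝ) - 1))
          * ∑ i, Real.sqrt (∑ t ∈ Finset.Icc 1 (T - 1), (g t i) ^ 4) := by
  -- `T - 1` truncates at `T = 0`, where both sides vanish.
  obtain rfl | hT := T.eq_zero_or_pos
  · simp
  set N := T - 1
  have hN : (N : ℝ) = T - 1 := Nat.cast_pred hT
  set G : Fin d → ℝ := fun i => √(1 + Real.log (T - 1)) * √(∑ t ∈ Icc 1 N, g t i ^ 4)
  have hcoord : ∀ i, ∑ t ∈ Icc 1 N, (√(t : ℝ))⁻¹ * m t i ^ 2 ≤ (1 - β) / τlo * G i := by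
    intro i
    rw [div_mul_eq_mul_div, le_div_iff₀' hτlo0]
    calc τlo * ∑ t ∈ Icc 1 N, (√(t : ℝ))⁻¹ * m t i ^ 2
        ≤ (1 - β) * ∑ t ∈ Icc 1 N, (√(t : ℝ))⁻¹ * g t i ^ 2 :=
          mul_sum_mul_sq_momentum_le hτlo0.le hτloβ (by linarith) (congrFun hm0 i)
            (fun t ht => hτ t (mem_Icc.1 ht).1 (mem_Icc.1 ht).2)
            (fun t ht => hm t (mem_Icc.1 ht).1 (mem_Icc.1 ht).2 i)
            (fun t => by positivity) antitoneOn_inv_sqrt_natCast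
      _ ≤ (1 - β) * G i := by
          refine mul_le_mul_of_nonneg_left ?_ (by linarith)
          simpa only [G, hN] using sum_Icc_inv_sqrt_mul_sq_le N (g · i)
  have hratio : (1 - β) / τlo ≤ ((1 - β) / τlo) ^ 2 :=
    le_self_pow₀ ((one_le_div hτlo0).2 hτloβ) two_ne_zero
  calc _ ≤ ∑ t ∈ Icc 1 N, α / √(t : ℝ) * ∑ i, m t i ^ 2 * ε⁻¹ := by
        gcongr with t ht i
        exact (Real.le_sqrt' hε).2 (hv t (mem_Icc.1 ht).1 (mem_Icc.1 ht).2 i)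
    _ = α / ε * ∑ i, ∑ t ∈ Icc 1 N, (√(t : ℝ))⁻¹ * m t i ^ 2 := by
        simp only [mul_sum]
        rw [sum_comm]
        exact sum_congr rfl fun i _ => sum_congr rfl fun t _ => by ring
    _ ≤ α / ε * ∑ i, ((1 - β) / τlo) ^ 2 * G i := by
        gcongr with i
        exact (hcoord i).trans (by gcongr)
    _ = _ := by
        simp only [G, ← mul_sum]
        field_simp

/-- Bound on `Σ_{t=1}^{T-1} α_t ‖m_t‖²_{v̂_t^{-1/2}}` in the AdaTerm regret analysis,
with scheduled learning rate `α_t = α/√t` and scale estimates bounded below by `ε²`. -/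
theorem adaterm_momentum_norm_sum_bound
    (d T : ℕ) (hd : 1 ≤ d) (hT : 2 ≤ T)
    (β τlo ε α : ℝ) (hβ0 : 0 < β) (hβ1 : β < 1)
    (hτlo0 : 0 < τlo) (hτloβ : τlo ≤ 1 - β) (hε : 0 < ε) (hα : 0 < α)
    (g : ℕ → Fin d → ℝ) (τ : ℕ → ℝ)
    (hτ : ∀ t, 1 ≤ t → t ≤ T - 1 → τlo ≤ τ t ∧ τ t ≤ 1 - β)
    (m : ℕ → Fin d → ℝ) (hm0 : m 0 = 0)
    (hm : ∀ t, 1 ≤ t → t ≤ T - 1 → ∀ i, m t i = (1 - τ t) * m (t - 1) i + τ t * g t i)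
    (v : ℕ → Fin d → ℝ) (hv : ∀ t, 1 ≤ t → t ≤ T - 1 → ∀ i, ε ^ 2 ≤ v t i) :
    ∑ t ∈ Finset.Icc 1 (T - 1),
        (α / Real.sqrt t) * ∑ i, (m t i) ^ 2 * (Real.sqrt (v t i))⁻¹
      ≤ α * (1 - β) ^ 2 / (ε * τlo ^ 2) * Real.sqrt (1 + Real.log ((T : ℝ) - 1))
          * ∑ i, Real.sqrt (∑ t ∈ Finset.Icc 1 (T - 1), (g t i) ^ 4) :=
  adaterm_momentum_norm_sum_bound_general d T β τlo ε α hβ0 hτlo0 hτloβ hε hα g τ hτ m hm0 hm v hv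
end

section
/- Let d ≥ 1, T ≥ 1, let 0 < β < 1, 0 < τ̲ ≤ 1 − β, ε > 0, α_T > 0, D ≥ 0. Let g_1,…,g_T ∈ ℝ^d, let τ_1,…,τ_T ∈ [τ̲, 1 − β], let m_0 = 0, m_t = (1 − τ_t) m_{t−1} + τ_t g_t, let v_T ∈ ℝ^d with v_{T,i} ≥ ε² for all i, and let θ_T, θ* ∈ ℝ^d with |θ_{T,i} − θ*_i| ≤ D for all i. Then (1/τ_T) ⟨m_T, θ_T − θ*⟩ ≤ (1/τ_T) · (D²/(4 α_T)) · Σ_i v_{T,i}^{1/2} + ((1 − β)² α_T/(ε τ̲²)) Σ_{i=1}^{d} Σ_{k=1}^{T} (1 − τ̲)^{T−k} g_{k,i}². -/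
/-!
Squaring the momentum recursion and using convexity of `x ↦ x²` gives
`m_{t,i}² ≤ (1 - τ̲) m_{t-1,i}² + (1 - β) g_{t,i}²`, which unrolls to a geometrically weighted
sum of the `g_{k,i}²`. Young's inequality splits `m_{T,i} (θ_{T,i} - θ*_i)` into
`D² v_{T,i}^{1/2} / (4 α_T)` plus `α_T m_{T,i}² / v_{T,i}^{1/2}`, and `v_{T,i}^{1/2} ≥ ε`
together with `1 / τ_T ≤ 1 / τ̲ ≤ (1 - β) / τ̲²` bounds the second part.
-/

open Finset

theorem sq_one_sub_mul_add_mul_le_s9 {τ : ℝ} (h0 : 0 ≤ τ) (h1 : τ ≤ 1) (a b : ℝ) :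
    ((1 - τ) * a + τ * b) ^ 2 ≤ (1 - τ) * a ^ 2 + τ * b ^ 2 := by
  nlinarith [mul_nonneg (mul_nonneg h0 (sub_nonneg.2 h1)) (sq_nonneg (a - b))]

theorem sum_Icc_pow_sub_mul_succ (r : ℝ) (f : ℕ → ℝ) (n : ℕ) :
    ∑ k ∈ Icc 1 (n + 1), r ^ (n + 1 - k) * f k
      = f (n + 1) + r * ∑ k ∈ Icc 1 n, r ^ (n - k) * f k := by
  rw [sum_Icc_succ_top (by omega), Nat.sub_self, pow_zero, one_mul, add_comm, mul_sum]
  congr 1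
  refine sum_congr rfl fun k hk => ?_
  rw [← mul_assoc, ← pow_succ', Nat.sub_add_comm (mem_Icc.1 hk).2]

theorem sq_ema_le_sum_pow_mul_sq {τlo τhi : ℝ} (hτlo : 0 ≤ τlo) (hτhi : τhi ≤ 1)
    {g τ m : ℕ → ℝ} (hm0 : m 0 = 0) (T : ℕ)
    (hτ : ∀ t, 1 ≤ t → t ≤ T → τlo ≤ τ t ∧ τ t ≤ τhi)
    (hm : ∀ t, 1 ≤ t → t ≤ T → m t = (1 - τ t) * m (t - 1) + τ t * g t) :
    m T ^ 2 ≤ τhi * ∑ k ∈ Icc 1 T, (1 - τlo) ^ (T - k) * g k ^ 2 := by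
  induction T with
  | zero => simp [hm0]
  | succ n ih =>
    obtain ⟨hlo, hhi⟩ := hτ (n + 1) (by omega) le_rfl
    have ih := ih (fun t h1 h2 => hτ t h1 (by omega)) (fun t h1 h2 => hm t h1 (by omega))
    have hconv := sq_one_sub_mul_add_mul_le_s9 (hτlo.trans hlo) (hhi.trans hτhi) (m n) (g (n + 1))
    rw [hm (n + 1) (by omega) le_rfl, Nat.add_sub_cancel,
      sum_Icc_pow_sub_mul_succ (1 - τlo) (fun k => g k ^ 2) n]
    have hdecay : (1 - τ (n + 1)) * m n ^ 2 ≤ (1 - τlo) * m n ^ 2 :=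
      mul_le_mul_of_nonneg_right (by linarith) (sq_nonneg _)
    have hnew : τ (n + 1) * g (n + 1) ^ 2 ≤ τhi * g (n + 1) ^ 2 :=
      mul_le_mul_of_nonneg_right hhi (sq_nonneg _)
    nlinarith [mul_le_mul_of_nonneg_left ih (by linarith : 0 ≤ 1 - τlo)]

theorem mul_le_young_of_abs_le {a s D x y : ℝ} (ha : 0 < a) (hs : 0 < s) (hy : |y| ≤ D) :
    x * y ≤ D ^ 2 / (4 * a) * s + a / s * x ^ 2 := by
  have hsq : D ^ 2 / (4 * a) * s + a / s * x ^ 2 - |x| * D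
      = (D * s - 2 * a * |x|) ^ 2 / (4 * a * s) := by
    field_simp
    rw [← sq_abs x]
    ring
  have hxy : x * y ≤ |x| * D := by
    calc x * y ≤ |x * y| := le_abs_self _
      _ = |x| * |y| := abs_mul x y
      _ ≤ |x| * D := mul_le_mul_of_nonneg_left hy (abs_nonneg x)
  have : 0 ≤ (D * s - 2 * a * |x|) ^ 2 / (4 * a * s) := by positivity
  linarith

theorem div_le_sq_div_sq_of_le {τlo τ c : ℝ} (hτlo : 0 < τlo) (hτ : τlo ≤ τ) (hc : τlo ≤ c) :
    c / τ ≤ c ^ 2 / τlo ^ 2 :=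
  calc c / τ ≤ c / τlo := div_le_div_of_nonneg_left (hτlo.le.trans hc) hτlo hτ
    _ = c * τlo / τlo ^ 2 := by field_simp
    _ ≤ c * c / τlo ^ 2 := by gcongr; linarith
    _ = c ^ 2 / τlo ^ 2 := by ring

theorem adaterm_residual_term_bound_general
    (d T : ℕ) (hT : 1 ≤ T)
    (β τlo ε aT D : ℝ) (hβ0 : 0 < β)
    (hτlo0 : 0 < τlo) (hτloβ : τlo ≤ 1 - β) (hε : 0 < ε) (haT : 0 < aT)
    (g : ℕ → Fin d → ℝ) (τ : ℕ → ℝ)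
    (hτ : ∀ t, 1 ≤ t → t ≤ T → τlo ≤ τ t ∧ τ t ≤ 1 - β)
    (m : ℕ → Fin d → ℝ) (hm0 : m 0 = 0)
    (hm : ∀ t, 1 ≤ t → t ≤ T → ∀ i, m t i = (1 - τ t) * m (t - 1) i + τ t * g t i)
    (vT : Fin d → ℝ) (hvT : ∀ i, ε ^ 2 ≤ vT i)
    (θT θs : Fin d → ℝ) (hθ : ∀ i, |θT i - θs i| ≤ D) :
    (1 / τ T) * ∑ i, m T i * (θT i - θs i)
      ≤ (1 / τ T) * (D ^ 2 / (4 * aT)) * ∑ i, Real.sqrt (vT i)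
        + (1 - β) ^ 2 * aT / (ε * τlo ^ 2)
          * ∑ i, ∑ k ∈ Finset.Icc 1 T, (1 - τlo) ^ (T - k) * (g k i) ^ 2 := by
  set S : Fin d → ℝ := fun i => ∑ k ∈ Icc 1 T, (1 - τlo) ^ (T - k) * g k i ^ 2
  have hcoord : ∀ i, m T i * (θT i - θs i)
      ≤ D ^ 2 / (4 * aT) * Real.sqrt (vT i) + aT / ε * ((1 - β) * S i) := by
    intro i
    have hsqrt : ε ≤ Real.sqrt (vT i) := (Real.le_sqrt' hε).2 (hvT i)
    have hmT := sq_ema_le_sum_pow_mul_sq hτlo0.le (by linarith) (congrFun hm0 i) T hτ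
      (fun t h1 h2 => hm t h1 h2 i)
    calc m T i * (θT i - θs i)
        ≤ D ^ 2 / (4 * aT) * Real.sqrt (vT i) + aT / Real.sqrt (vT i) * m T i ^ 2 :=
          mul_le_young_of_abs_le haT (hε.trans_le hsqrt) (hθ i)
      _ ≤ D ^ 2 / (4 * aT) * Real.sqrt (vT i) + aT / ε * ((1 - β) * S i) := by
          gcongr
  have hS : 0 ≤ ∑ i, S i := sum_nonneg fun i _ => sum_nonneg fun k _ =>
    mul_nonneg (pow_nonneg (by linarith) _) (sq_nonneg _)
  obtain ⟨hτT, -⟩ := hτ T hT le_rfl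
  calc (1 / τ T) * ∑ i, m T i * (θT i - θs i)
      ≤ 1 / τ T * ∑ i, (D ^ 2 / (4 * aT) * Real.sqrt (vT i) + aT / ε * ((1 - β) * S i)) :=
        mul_le_mul_of_nonneg_left (sum_le_sum fun i _ => hcoord i)
          (one_div_nonneg.2 (hτlo0.trans_le hτT).le)
    _ = 1 / τ T * (D ^ 2 / (4 * aT)) * ∑ i, Real.sqrt (vT i)
          + aT / ε * ((1 - β) / τ T) * ∑ i, S i := by
        simp only [sum_add_distrib, ← mul_sum]
        ring
    _ ≤ 1 / τ T * (D ^ 2 / (4 * aT)) * ∑ i, Real.sqrt (vT i)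
          + aT / ε * ((1 - β) ^ 2 / τlo ^ 2) * ∑ i, S i := by
        gcongr _ + _ * ?_ * _
        exact div_le_sq_div_sq_of_le hτlo0 hτT hτloβ
    _ = _ := by ring

/-- Bound of the residual term `(1/τ_T)⟨m_T, θ_T - θ*⟩` in the AdaTerm regret analysis. -/
theorem adaterm_residual_term_bound
    (d T : ℕ) (hd : 1 ≤ d) (hT : 1 ≤ T)
    (β τlo ε aT D : ℝ) (hβ0 : 0 < β) (hβ1 : β < 1)
    (hτlo0 : 0 < τlo) (hτloβ : τlo ≤ 1 - β) (hε : 0 < ε) (haT : 0 < aT) (hD : 0 ≤ D)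
    (g : ℕ → Fin d → ℝ) (τ : ℕ → ℝ)
    (hτ : ∀ t, 1 ≤ t → t ≤ T → τlo ≤ τ t ∧ τ t ≤ 1 - β)
    (m : ℕ → Fin d → ℝ) (hm0 : m 0 = 0)
    (hm : ∀ t, 1 ≤ t → t ≤ T → ∀ i, m t i = (1 - τ t) * m (t - 1) i + τ t * g t i)
    (vT : Fin d → ℝ) (hvT : ∀ i, ε ^ 2 ≤ vT i)
    (θT θs : Fin d → ℝ) (hθ : ∀ i, |θT i - θs i| ≤ D) :
    (1 / τ T) * ∑ i, m T i * (θT i - θs i)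
      ≤ (1 / τ T) * (D ^ 2 / (4 * aT)) * ∑ i, Real.sqrt (vT i)
        + (1 - β) ^ 2 * aT / (ε * τlo ^ 2)
          * ∑ i, ∑ k ∈ Finset.Icc 1 T, (1 - τlo) ^ (T - k) * (g k i) ^ 2 :=
  adaterm_residual_term_bound_general d T hT β τlo ε aT D hβ0 hτlo0 hτloβ hε haT g τ hτ m hm0 hm vT
    hvT θT θs hθ
end

section
/- (Non-robust case regret bound.) Let d ≥ 1, T ≥ 2, let 0 < β < 1, ε > 0, α > 0, D ≥ 0, and set α_t = α/√t. Let f_1,…,f_T : ℝ^d → ℝ be convex functions, let θ_1 ∈ ℝ^d, and suppose for each t: f_t is differentiable at θ_t with gradient g_t = ∇f_t(θ_t); m_0 = 0 and m_t = β m_{t−1} + (1 − β) g_t; v_t ∈ ℝ^d with v_{t,i} ≥ ε² for all i; and θ_{t+1,i} = θ_{t,i} − α_t v_{t,i}^{−1/2} m_{t,i} for all i. Let θ* ∈ ℝ^d satisfy |θ_{t,i} − θ*_i| ≤ D for all 1 ≤ t ≤ T and all i. Then R_T = Σ_{t=1}^{T} ( f_t(θ_t) − f_t(θ*) ) satisfies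 R_T ≤ (D² √T/(4(1 − β) α)) Σ_i v_{T,i}^{1/2} + (1/2) Σ_{t=1}^{T−1} (D²/α_t) Σ_i v_{t,i}^{1/2} + (α/(ε √T)) Σ_{k=1}^{T} Σ_i β^{T−k} g_{k,i}² + ((1 + β) α sqrt(1 + log(T − 1))/(2(1 − β) ε)) Σ_{i=1}^{d} sqrt( Σ_{t=1}^{T−1} g_{t,i}⁴ ). -/
/-!
By convexity the regret is at most `∑ₜ ⟪gₜ, θₜ - θ*⟫`, which splits into coordinates. In one
coordinate write `xₜ = θₜ,ᵢ - θ*ᵢ` and `cₜ = αₜ vₜ,ᵢ^(-1/2)`, so that `xₜ₊₁ = xₜ - cₜ mₜ`.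
Summation by parts against `(1 - β) gₜ = mₜ - β mₜ₋₁` gives
`(1 - β) ∑ₜ gₜ xₜ = m_T x_T + ∑_{t<T} mₜ (xₜ - β xₜ₊₁)`, and each summand on the right equals
`(1 - β) (xₜ² - xₜ₊₁²) / (2cₜ) + (1 + β) cₜ mₜ² / 2`. The boundary term is bounded by Young's
inequality, the differences of squares by `D²`, and `∑ₜ cₜ mₜ²` by Jensen's inequality for the
exponential average, an exchange of summation (`αₜ` decreases), and Cauchy–Schwarz against the
harmonic sum `∑_{t<T} 1/t ≤ 1 + log (T - 1)`.
-/

open Finset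

theorem ConvexOn.sub_le_of_hasFDerivAt {E : Type*} [NormedAddCommGroup E] [NormedSpace ℝ E]
    {s : Set E} {f : E → ℝ} {f' : E →L[ℝ] ℝ} {x y : E} (hf : ConvexOn ℝ s f)
    (hx : x ∈ s) (hy : y ∈ s) (hf' : HasFDerivAt f f' x) :
    f x - f y ≤ f' (x - y) := by
  set ℓ : ℝ →ᵃ[ℝ] E := AffineMap.lineMap x y
  have hderiv : HasDerivAt (f ∘ ℓ) (f' (y - x)) 0 := by
    have hf'' : HasFDerivAt f f' (ℓ 0) := by simpa [ℓ] using hf'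
    exact hf''.comp_hasDerivAt 0 AffineMap.hasDerivAt_lineMap
  have hslope := (hf.comp_affineMap ℓ).le_slope_of_hasDerivAt (x := 0) (y := 1)
    (by simpa [ℓ] using hx) (by simpa [ℓ] using hy) one_pos hderiv
  rw [slope_def_field] at hslope
  simp only [Function.comp_apply, ℓ, AffineMap.lineMap_apply_one, AffineMap.lineMap_apply_zero,
    sub_zero, div_one] at hslope
  rw [← neg_sub y x, map_neg]
  linarith

theorem ConvexOn.sub_le_inner_of_hasGradientAt {E : Type*} [NormedAddCommGroup E]
    [InnerProductSpace ℝ E] [CompleteSpace E] {s : Set E} {f : E → ℝ} {g x y : E}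
    (hf : ConvexOn ℝ s f) (hx : x ∈ s) (hy : y ∈ s) (hg : HasGradientAt f g x) :
    f x - f y ≤ inner ℝ g (x - y) :=
  hf.sub_le_of_hasFDerivAt hx hy hg.hasFDerivAt

theorem sum_pow_comp_le_inv_one_sub {β : ℝ} (hβ0 : 0 ≤ β) (hβ1 : β < 1) {s : Finset ℕ}
    {φ : ℕ → ℕ} (hφ : Set.InjOn φ s) : ∑ t ∈ s, β ^ φ t ≤ (1 - β)⁻¹ := by
  rw [← sum_image hφ, ← tsum_geometric_of_lt_one hβ0 hβ1]
  exact Summable.sum_le_tsum _ (fun _ _ => pow_nonneg hβ0 _) (summable_geometric_of_lt_one hβ0 hβ1)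

theorem sum_Icc_one_pow_sub_le {β : ℝ} (hβ0 : 0 ≤ β) (hβ1 : β < 1) (t : ℕ) :
    ∑ k ∈ Icc 1 t, β ^ (t - k) ≤ (1 - β)⁻¹ :=
  sum_pow_comp_le_inv_one_sub hβ0 hβ1 fun a ha b hb _ => by
    simp only [coe_Icc, Set.mem_Icc] at ha hb; omega

theorem ema_eq_discounted_sum {R : Type*} [CommRing R] {β : R} {G M : ℕ → R} {T : ℕ}
    (hM0 : M 0 = 0) (hM : ∀ t, 1 ≤ t → t ≤ T → M t = β * M (t - 1) + (1 - β) * G t) :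
    ∀ t ≤ T, M t = (1 - β) * ∑ k ∈ Icc 1 t, β ^ (t - k) * G k := by
  intro t
  induction t with
  | zero => simp [hM0]
  | succ n ih =>
    intro hn
    have hshift : ∀ k ∈ Icc 1 n, β ^ (n + 1 - k) * G k = β * (β ^ (n - k) * G k) := by
      intro k hk
      rw [Nat.sub_add_comm (mem_Icc.1 hk).2, pow_succ]
      ring
    rw [hM (n + 1) (by omega) hn, Nat.add_sub_cancel, ih (by omega), sum_Icc_succ_top (by omega),
      sum_congr rfl hshift, ← mul_sum, Nat.sub_self, pow_zero]
    ring

theorem sq_discounted_sum_le {β : ℝ} (hβ0 : 0 ≤ β) (hβ1 : β < 1) (G : ℕ → ℝ) (t : ℕ) :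
    ((1 - β) * ∑ k ∈ Icc 1 t, β ^ (t - k) * G k) ^ 2
      ≤ (1 - β) * ∑ k ∈ Icc 1 t, β ^ (t - k) * G k ^ 2 := by
  have hcs : (∑ k ∈ Icc 1 t, β ^ (t - k) * G k) ^ 2
      ≤ (∑ k ∈ Icc 1 t, β ^ (t - k)) * ∑ k ∈ Icc 1 t, β ^ (t - k) * G k ^ 2 :=
    sum_sq_le_sum_mul_sum_of_sq_le_mul _ (fun _ _ => pow_nonneg hβ0 _)
      (fun _ _ => by positivity) (fun _ _ => le_of_eq (by ring))
  calc ((1 - β) * ∑ k ∈ Icc 1 t, β ^ (t - k) * G k) ^ 2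
      ≤ (1 - β) ^ 2 * ((1 - β)⁻¹ * ∑ k ∈ Icc 1 t, β ^ (t - k) * G k ^ 2) := by
        rw [mul_pow]
        gcongr
        exact hcs.trans (by gcongr; exact sum_Icc_one_pow_sub_le hβ0 hβ1 t)
    _ = (1 - β) * ∑ k ∈ Icc 1 t, β ^ (t - k) * G k ^ 2 := by field_simp

theorem mul_le_mul_sq_add_sq_div {a x c : ℝ} (hc : 0 < c) :
    a * x ≤ c * a ^ 2 + x ^ 2 / (4 * c) := by
  have h : c * a ^ 2 + x ^ 2 / (4 * c) - a * x = (2 * c * a - x) ^ 2 / (4 * c) := by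
    field_simp
    ring
  have : 0 ≤ (2 * c * a - x) ^ 2 / (4 * c) := by positivity
  linarith

theorem discounted_sum_mul_le {β c D x : ℝ} (hβ0 : 0 ≤ β) (hβ1 : β < 1) (hc : 0 < c)
    (hx : |x| ≤ D) (G : ℕ → ℝ) (T : ℕ) :
    (∑ k ∈ Icc 1 T, β ^ (T - k) * G k) * x
      ≤ c * ∑ k ∈ Icc 1 T, β ^ (T - k) * G k ^ 2 + D ^ 2 / (4 * c * (1 - β)) := by
  have hx2 : x ^ 2 ≤ D ^ 2 := sq_le_sq' (abs_le.1 hx).1 (abs_le.1 hx).2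
  calc (∑ k ∈ Icc 1 T, β ^ (T - k) * G k) * x
      ≤ ∑ k ∈ Icc 1 T, β ^ (T - k) * (c * G k ^ 2 + D ^ 2 / (4 * c)) := by
        rw [sum_mul]
        refine sum_le_sum fun k _ => ?_
        rw [mul_assoc]
        exact mul_le_mul_of_nonneg_left
          ((mul_le_mul_sq_add_sq_div hc).trans (by gcongr)) (pow_nonneg hβ0 _)
    _ = c * ∑ k ∈ Icc 1 T, β ^ (T - k) * G k ^ 2
          + D ^ 2 / (4 * c) * ∑ k ∈ Icc 1 T, β ^ (T - k) := by
        rw [mul_sum, mul_sum, ← sum_add_distrib]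
        exact sum_congr rfl fun _ _ => by ring
    _ ≤ c * ∑ k ∈ Icc 1 T, β ^ (T - k) * G k ^ 2 + D ^ 2 / (4 * c) * (1 - β)⁻¹ := by
        gcongr
        exact sum_Icc_one_pow_sub_le hβ0 hβ1 T
    _ = c * ∑ k ∈ Icc 1 T, β ^ (T - k) * G k ^ 2 + D ^ 2 / (4 * c * (1 - β)) := by
        have : 1 - β ≠ 0 := by linarith
        field_simp

theorem ema_summation_by_parts {R : Type*} [CommRing R] {β : R} {G M X : ℕ → R} {n : ℕ}
    (hM0 : M 0 = 0) (hM : ∀ t, 1 ≤ t → t ≤ n + 1 → M t = β * M (t - 1) + (1 - β) * G t) :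
    (1 - β) * ∑ t ∈ Icc 1 (n + 1), G t * X t
      = M (n + 1) * X (n + 1) + ∑ t ∈ Icc 1 n, M t * (X t - β * X (t + 1)) := by
  induction n with
  | zero => simp [hM 1 le_rfl le_rfl, hM0]; ring
  | succ n ih =>
    have hM' := hM (n + 1 + 1) (by omega) le_rfl
    rw [Nat.add_sub_cancel] at hM'
    rw [sum_Icc_succ_top (by omega), mul_add, ih fun t h1 h2 => hM t h1 (by omega),
      sum_Icc_succ_top (by omega), hM']
    ring

theorem momentum_step_le {β c D M X : ℝ} (hβ : β ≤ 1) (hc : 0 < c) (hX : |X| ≤ D) :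
    M * (X - β * (X - c * M)) ≤ (1 - β) * (D ^ 2 / (2 * c)) + (1 + β) / 2 * (c * M ^ 2) := by
  have h : M * (X - β * (X - c * M))
      = (1 - β) * ((X ^ 2 - (X - c * M) ^ 2) / (2 * c)) + (1 + β) / 2 * (c * M ^ 2) := by
    field_simp
    ring
  have hX2 : X ^ 2 ≤ D ^ 2 := sq_le_sq' (abs_le.1 hX).1 (abs_le.1 hX).2
  rw [h]
  gcongr
  linarith [sq_nonneg (X - c * M)]

theorem sum_mul_discounted_sum_le {β : ℝ} (hβ0 : 0 ≤ β) (hβ1 : β < 1) {w a : ℕ → ℝ}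
    (hw : AntitoneOn w (Set.Ici 1)) (hw0 : ∀ k, 0 ≤ w k) (ha : ∀ k, 0 ≤ a k) (n : ℕ) :
    ∑ t ∈ Icc 1 n, w t * ∑ k ∈ Icc 1 t, β ^ (t - k) * a k
      ≤ (1 - β)⁻¹ * ∑ k ∈ Icc 1 n, w k * a k := by
  have hswap : ∑ t ∈ Icc 1 n, w t * ∑ k ∈ Icc 1 t, β ^ (t - k) * a k
      = ∑ k ∈ Icc 1 n, ∑ t ∈ Icc k n, w t * (β ^ (t - k) * a k) := by
    simp_rw [mul_sum]
    exact sum_comm' fun t k => by simp only [mem_Icc]; omega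
  rw [hswap, mul_sum]
  gcongr with k hk
  have hk1 : 1 ≤ k := (mem_Icc.1 hk).1
  calc ∑ t ∈ Icc k n, w t * (β ^ (t - k) * a k)
      ≤ ∑ t ∈ Icc k n, w k * (β ^ (t - k) * a k) :=
        sum_le_sum fun t ht => mul_le_mul_of_nonneg_right
          (hw hk1 (hk1.trans (mem_Icc.1 ht).1) (mem_Icc.1 ht).1)
          (mul_nonneg (pow_nonneg hβ0 _) (ha k))
    _ = w k * a k * ∑ t ∈ Icc k n, β ^ (t - k) := by
        rw [mul_sum]
        exact sum_congr rfl fun _ _ => by ring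
    _ ≤ w k * a k * (1 - β)⁻¹ :=
        mul_le_mul_of_nonneg_left (sum_pow_comp_le_inv_one_sub hβ0 hβ1 fun a ha b hb _ => by
          simp only [coe_Icc, Set.mem_Icc] at ha hb; omega) (mul_nonneg (hw0 k) (ha k))
    _ = (1 - β)⁻¹ * (w k * a k) := mul_comm _ _

theorem sum_div_sqrt_le (a : ℕ → ℝ) (n : ℕ) :
    ∑ k ∈ Icc 1 n, a k / √k ≤ √(1 + Real.log n) * √(∑ k ∈ Icc 1 n, a k ^ 2) := by
  have hcs := sum_mul_sq_le_sq_mul_sq (Icc 1 n) (fun k => (√(k : ℝ))⁻¹) a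
  have hharm : ∑ k ∈ Icc 1 n, ((√(k : ℝ))⁻¹) ^ 2 ≤ 1 + Real.log n := by
    have h := harmonic_le_one_add_log n
    rw [harmonic_eq_sum_Icc] at h
    push_cast at h
    simpa only [inv_pow, Real.sq_sqrt (Nat.cast_nonneg _)] using h
  rw [← Real.sqrt_mul (by positivity)]
  refine Real.le_sqrt_of_sq_le ?_
  simp only [div_eq_inv_mul]
  exact hcs.trans (by gcongr)

theorem sum_stepsize_mul_sq_ema_le {β ε α : ℝ} (hβ0 : 0 ≤ β) (hβ1 : β < 1) (hε : 0 < ε)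
    (hα : 0 < α) {G M V : ℕ → ℝ} {n : ℕ}
    (hM : ∀ t ≤ n, M t = (1 - β) * ∑ k ∈ Icc 1 t, β ^ (t - k) * G k)
    (hV : ∀ t, 1 ≤ t → t ≤ n → ε ≤ √(V t)) :
    ∑ t ∈ Icc 1 n, α / √t * (√(V t))⁻¹ * M t ^ 2
      ≤ α / ε * (√(1 + Real.log n) * √(∑ t ∈ Icc 1 n, G t ^ 4)) := by
  have hβ : 0 < 1 - β := by linarith
  have hw : AntitoneOn (fun t : ℕ => (√(t : ℝ))⁻¹) (Set.Ici 1) := fun a ha b _ hab =>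
    inv_anti₀ (Real.sqrt_pos.2 (Nat.cast_pos.2 ha)) (Real.sqrt_le_sqrt (Nat.cast_le.2 hab))
  calc ∑ t ∈ Icc 1 n, α / √t * (√(V t))⁻¹ * M t ^ 2
      ≤ ∑ t ∈ Icc 1 n, α / ε * (1 - β) * ((√t)⁻¹ * ∑ k ∈ Icc 1 t, β ^ (t - k) * G k ^ 2) := by
        refine sum_le_sum fun t ht => ?_
        obtain ⟨ht1, htn⟩ := mem_Icc.1 ht
        calc α / √t * (√(V t))⁻¹ * M t ^ 2
            ≤ α / √t * ε⁻¹ * ((1 - β) * ∑ k ∈ Icc 1 t, β ^ (t - k) * G k ^ 2) := by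
              rw [hM t htn]
              gcongr
              · exact hV t ht1 htn
              · exact sq_discounted_sum_le hβ0 hβ1 G t
          _ = _ := by ring
    _ = α / ε * (1 - β) * ∑ t ∈ Icc 1 n, (√t)⁻¹ * ∑ k ∈ Icc 1 t, β ^ (t - k) * G k ^ 2 := by
        rw [mul_sum]
    _ ≤ α / ε * (1 - β) * ((1 - β)⁻¹ * ∑ k ∈ Icc 1 n, (√k)⁻¹ * G k ^ 2) := by
        gcongr
        exact sum_mul_discounted_sum_le hβ0 hβ1 hw (fun _ => by positivity)
          (fun _ => sq_nonneg _) n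
    _ = α / ε * ∑ k ∈ Icc 1 n, G k ^ 2 / √k := by
        field_simp
    _ ≤ α / ε * (√(1 + Real.log n) * √(∑ t ∈ Icc 1 n, G t ^ 4)) := by
        gcongr
        have h := sum_div_sqrt_le (fun k => G k ^ 2) n
        simp only [← pow_mul] at h
        exact h

theorem discounted_sum_mul_le_of_le_sqrt {T : ℕ} (hT : 1 ≤ T) {β ε α D x v : ℝ}
    (hβ0 : 0 ≤ β) (hβ1 : β < 1) (hε : 0 < ε) (hα : 0 < α) (hx : |x| ≤ D) (hv : ε ≤ √v)
    (G : ℕ → ℝ) :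
    (∑ k ∈ Icc 1 T, β ^ (T - k) * G k) * x
      ≤ D ^ 2 * √T / (4 * (1 - β) * α) * √v
        + α / (ε * √T) * ∑ k ∈ Icc 1 T, β ^ (T - k) * G k ^ 2 := by
  have hT' : 0 < √(T : ℝ) := Real.sqrt_pos.2 (by exact_mod_cast hT)
  calc (∑ k ∈ Icc 1 T, β ^ (T - k) * G k) * x
      ≤ α / (ε * √T) * ∑ k ∈ Icc 1 T, β ^ (T - k) * G k ^ 2
        + D ^ 2 / (4 * (α / (ε * √T)) * (1 - β)) :=
        discounted_sum_mul_le hβ0 hβ1 (by positivity) hx G T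
    _ = D ^ 2 * √T / (4 * (1 - β) * α) * ε
        + α / (ε * √T) * ∑ k ∈ Icc 1 T, β ^ (T - k) * G k ^ 2 := by
        field_simp
        ring
    _ ≤ _ := by gcongr

theorem sum_momentum_step_le {β α D : ℝ} (hβ : β ≤ 1) (hα : 0 < α) {M V X : ℕ → ℝ} {n : ℕ}
    (hV : ∀ t, 1 ≤ t → t ≤ n → 0 < V t)
    (hX : ∀ t, 1 ≤ t → t ≤ n → X (t + 1) = X t - α / √t * (√(V t))⁻¹ * M t)
    (hXD : ∀ t, 1 ≤ t → t ≤ n → |X t| ≤ D) :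
    ∑ t ∈ Icc 1 n, M t * (X t - β * X (t + 1))
      ≤ (1 - β) * ((1 / 2) * ∑ t ∈ Icc 1 n, D ^ 2 / (α / √t) * √(V t))
        + (1 + β) / 2 * ∑ t ∈ Icc 1 n, α / √t * (√(V t))⁻¹ * M t ^ 2 := by
  have hpos : ∀ t ∈ Icc 1 n, 0 < √(t : ℝ) ∧ 0 < √(V t) := fun t ht =>
    ⟨Real.sqrt_pos.2 (by exact_mod_cast (mem_Icc.1 ht).1),
      Real.sqrt_pos.2 (hV t (mem_Icc.1 ht).1 (mem_Icc.1 ht).2)⟩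
  calc ∑ t ∈ Icc 1 n, M t * (X t - β * X (t + 1))
      ≤ ∑ t ∈ Icc 1 n, ((1 - β) * (D ^ 2 / (2 * (α / √t * (√(V t))⁻¹)))
          + (1 + β) / 2 * (α / √t * (√(V t))⁻¹ * M t ^ 2)) := by
        refine sum_le_sum fun t ht => ?_
        obtain ⟨ht1, htn⟩ := mem_Icc.1 ht
        obtain ⟨h1, h2⟩ := hpos t ht
        rw [hX t ht1 htn]
        exact momentum_step_le hβ (by positivity) (hXD t ht1 htn)
    _ = _ := by
        rw [sum_add_distrib, ← mul_sum, ← mul_sum, mul_sum (a := 1 / 2)]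
        congr 2
        refine sum_congr rfl fun t ht => ?_
        obtain ⟨h1, h2⟩ := hpos t ht
        field_simp

theorem sum_grad_mul_dist_le {T : ℕ} (hT : 1 ≤ T) {β ε α D : ℝ} (hβ0 : 0 ≤ β) (hβ1 : β < 1)
    (hε : 0 < ε) (hα : 0 < α) {G M V X : ℕ → ℝ} (hM0 : M 0 = 0)
    (hM : ∀ t, 1 ≤ t → t ≤ T → M t = β * M (t - 1) + (1 - β) * G t)
    (hV : ∀ t, 1 ≤ t → t ≤ T → ε ^ 2 ≤ V t)
    (hX : ∀ t, 1 ≤ t → t < T → X (t + 1) = X t - α / √t * (√(V t))⁻¹ * M t)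
    (hXD : ∀ t, 1 ≤ t → t ≤ T → |X t| ≤ D) :
    ∑ t ∈ Icc 1 T, G t * X t
      ≤ D ^ 2 * √T / (4 * (1 - β) * α) * √(V T)
        + (1 / 2) * ∑ t ∈ Icc 1 (T - 1), D ^ 2 / (α / √t) * √(V t)
        + α / (ε * √T) * ∑ k ∈ Icc 1 T, β ^ (T - k) * G k ^ 2
        + (1 + β) * α * √(1 + Real.log ((T : ℝ) - 1)) / (2 * (1 - β) * ε)
          * √(∑ t ∈ Icc 1 (T - 1), G t ^ 4) := by
  obtain ⟨n, rfl⟩ : ∃ n, T = n + 1 := ⟨T - 1, by omega⟩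
  rw [Nat.add_sub_cancel, show ((n + 1 : ℕ) : ℝ) - 1 = n by push_cast; ring]
  have hβ : 0 < 1 - β := by linarith
  have hεV : ∀ t, 1 ≤ t → t ≤ n + 1 → ε ≤ √(V t) := fun t h1 h2 =>
    (Real.le_sqrt' hε).2 (hV t h1 h2)
  have hema := ema_eq_discounted_sum hM0 hM
  have hlast : M (n + 1) * X (n + 1)
      ≤ (1 - β) * (D ^ 2 * √(n + 1 : ℕ) / (4 * (1 - β) * α) * √(V (n + 1))
        + α / (ε * √(n + 1 : ℕ)) * ∑ k ∈ Icc 1 (n + 1), β ^ (n + 1 - k) * G k ^ 2) := by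
    rw [hema (n + 1) le_rfl, mul_assoc]
    exact mul_le_mul_of_nonneg_left (discounted_sum_mul_le_of_le_sqrt (by omega) hβ0 hβ1 hε hα
      (hXD _ (by omega) le_rfl) (hεV _ (by omega) le_rfl) G) hβ.le
  have hsteps := sum_momentum_step_le (n := n) hβ1.le hα
    (fun t h1 h2 => (sq_pos_of_pos hε).trans_le (hV t h1 (by omega)))
    (fun t h1 h2 => hX t h1 (by omega)) (fun t h1 h2 => hXD t h1 (by omega))
  have hvar := sum_stepsize_mul_sq_ema_le (n := n) hβ0 hβ1 hε hα (fun t ht => hema t (by omega))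
    (fun t h1 h2 => hεV t h1 (by omega))
  refine le_of_mul_le_mul_left ?_ hβ
  calc (1 - β) * ∑ t ∈ Icc 1 (n + 1), G t * X t
      = M (n + 1) * X (n + 1) + ∑ t ∈ Icc 1 n, M t * (X t - β * X (t + 1)) :=
        ema_summation_by_parts hM0 hM
    _ ≤ (1 - β) * (D ^ 2 * √(n + 1 : ℕ) / (4 * (1 - β) * α) * √(V (n + 1))
          + α / (ε * √(n + 1 : ℕ)) * ∑ k ∈ Icc 1 (n + 1), β ^ (n + 1 - k) * G k ^ 2)
        + ((1 - β) * ((1 / 2) * ∑ t ∈ Icc 1 n, D ^ 2 / (α / √t) * √(V t))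
          + (1 + β) / 2 * (α / ε * (√(1 + Real.log n) * √(∑ t ∈ Icc 1 n, G t ^ 4)))) :=
        add_le_add hlast (hsteps.trans (by gcongr))
    _ = _ := by
        field_simp
        ring

theorem adaterm_nonrobust_regret_bound_general
    (d T : ℕ) (hT : 2 ≤ T)
    (β ε α D : ℝ) (hβ0 : 0 < β) (hβ1 : β < 1)
    (hε : 0 < ε) (hα : 0 < α)
    (f : ℕ → EuclideanSpace ℝ (Fin d) → ℝ)
    (hconv : ∀ t, 1 ≤ t → t ≤ T → ConvexOn ℝ Set.univ (f t))
    (θ : ℕ → EuclideanSpace ℝ (Fin d)) (g : ℕ → EuclideanSpace ℝ (Fin d))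
    (hgrad : ∀ t, 1 ≤ t → t ≤ T → HasGradientAt (f t) (g t) (θ t))
    (m : ℕ → Fin d → ℝ) (hm0 : m 0 = 0)
    (hm : ∀ t, 1 ≤ t → t ≤ T → ∀ i, m t i = β * m (t - 1) i + (1 - β) * g t i)
    (v : ℕ → Fin d → ℝ) (hv : ∀ t, 1 ≤ t → t ≤ T → ∀ i, ε ^ 2 ≤ v t i)
    (hupd : ∀ t, 1 ≤ t → t ≤ T → ∀ i,
      θ (t + 1) i = θ t i - (α / Real.sqrt t) * (Real.sqrt (v t i))⁻¹ * m t i)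
    (θs : EuclideanSpace ℝ (Fin d))
    (hdiam : ∀ t, 1 ≤ t → t ≤ T → ∀ i, |θ t i - θs i| ≤ D) :
    ∑ t ∈ Finset.Icc 1 T, (f t (θ t) - f t θs)
      ≤ D ^ 2 * Real.sqrt T / (4 * (1 - β) * α) * ∑ i, Real.sqrt (v T i)
        + (1 / 2) * ∑ t ∈ Finset.Icc 1 (T - 1),
            (D ^ 2 / (α / Real.sqrt t)) * ∑ i, Real.sqrt (v t i)
        + α / (ε * Real.sqrt T)
          * ∑ k ∈ Finset.Icc 1 T, ∑ i, β ^ (T - k) * (g k i) ^ 2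
        + (1 + β) * α * Real.sqrt (1 + Real.log ((T : ℝ) - 1)) / (2 * (1 - β) * ε)
          * ∑ i, Real.sqrt (∑ t ∈ Finset.Icc 1 (T - 1), (g t i) ^ 4) := by
  have hlin : ∑ t ∈ Icc 1 T, (f t (θ t) - f t θs)
      ≤ ∑ i, ∑ t ∈ Icc 1 T, g t i * (θ t i - θs i) := by
    rw [sum_comm]
    refine sum_le_sum fun t ht => ?_
    obtain ⟨ht1, htT⟩ := mem_Icc.1 ht
    have h := (hconv t ht1 htT).sub_le_inner_of_hasGradientAt (y := θs) trivial trivial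
      (hgrad t ht1 htT)
    simpa [PiLp.inner_apply, mul_comm] using h
  refine hlin.trans ((sum_le_sum fun i _ => sum_grad_mul_dist_le (by omega) hβ0.le hβ1 hε hα
    (G := fun t => g t i) (M := fun t => m t i) (V := fun t => v t i)
    (X := fun t => θ t i - θs i) (congrFun hm0 i) (fun t h1 h2 => hm t h1 h2 i)
    (fun t h1 h2 => hv t h1 h2 i) (fun t h1 h2 => by rw [hupd t h1 h2.le i]; ring)
    (fun t h1 h2 => hdiam t h1 h2 i)).trans_eq ?_)
  simp only [sum_add_distrib, mul_sum]
  rw [sum_comm (s := Icc 1 (T - 1)), sum_comm (s := Icc 1 T)]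

/-- Non-robust (Gaussian-limit) case regret bound (Corollary 1 of the AdaTerm paper):
constant interpolation factor `τ_t = 1 - β`, i.e. standard EMA momentum. -/
theorem adaterm_nonrobust_regret_bound
    (d T : ℕ) (hd : 1 ≤ d) (hT : 2 ≤ T)
    (β ε α D : ℝ) (hβ0 : 0 < β) (hβ1 : β < 1)
    (hε : 0 < ε) (hα : 0 < α) (hD : 0 ≤ D)
    (f : ℕ → EuclideanSpace ℝ (Fin d) → ℝ)
    (hconv : ∀ t, 1 ≤ t → t ≤ T → ConvexOn ℝ Set.univ (f t))
    (θ : ℕ → EuclideanSpace ℝ (Fin d)) (g : ℕ → EuclideanSpace ℝ (Fin d))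
    (hgrad : ∀ t, 1 ≤ t → t ≤ T → HasGradientAt (f t) (g t) (θ t))
    (m : ℕ → Fin d → ℝ) (hm0 : m 0 = 0)
    (hm : ∀ t, 1 ≤ t → t ≤ T → ∀ i, m t i = β * m (t - 1) i + (1 - β) * g t i)
    (v : ℕ → Fin d → ℝ) (hv : ∀ t, 1 ≤ t → t ≤ T → ∀ i, ε ^ 2 ≤ v t i)
    (hupd : ∀ t, 1 ≤ t → t ≤ T → ∀ i,
      θ (t + 1) i = θ t i - (α / Real.sqrt t) * (Real.sqrt (v t i))⁻¹ * m t i)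
    (θs : EuclideanSpace ℝ (Fin d))
    (hdiam : ∀ t, 1 ≤ t → t ≤ T → ∀ i, |θ t i - θs i| ≤ D) :
    ∑ t ∈ Finset.Icc 1 T, (f t (θ t) - f t θs)
      ≤ D ^ 2 * Real.sqrt T / (4 * (1 - β) * α) * ∑ i, Real.sqrt (v T i)
        + (1 / 2) * ∑ t ∈ Finset.Icc 1 (T - 1),
            (D ^ 2 / (α / Real.sqrt t)) * ∑ i, Real.sqrt (v t i)
        + α / (ε * Real.sqrt T)
          * ∑ k ∈ Finset.Icc 1 T, ∑ i, β ^ (T - k) * (g k i) ^ 2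
        + (1 + β) * α * Real.sqrt (1 + Real.log ((T : ℝ) - 1)) / (2 * (1 - β) * ε)
          * ∑ i, Real.sqrt (∑ t ∈ Finset.Icc 1 (T - 1), (g t i) ^ 4) :=
  adaterm_nonrobust_regret_bound_general d T hT β ε α D hβ0 hβ1 hε hα f hconv θ g hgrad m hm0 hm v
    hv hupd θs hdiam
end

section
/- Let ψ : (0,∞) → ℝ be the digamma function, i.e. ψ(x) is the derivative at x of the function y ↦ log Γ(y), where Γ is the real Gamma function. Then for every x > 0: log x − 1/x ≤ ψ(x) ≤ log x − 1/(2x). -/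
/-!
Write `f = log ∘ Γ`, which is convex on `(0, ∞)` and satisfies `f (y + 1) = f y + log y`.
Convexity compares `ψ = f'` with the slope `log y` of `f` on `[y, y + 1]`, giving
`ψ y ≤ log y ≤ ψ (y + 1) = ψ y + 1 / y`; the right half is the lower bound.
For the upper bound, `h y = ψ y - log y + 1 / (2y)` satisfies `h y ≤ h (y + 1)`, because the
trapezoid rule overestimates `∫_y^{y+1} dt / t` for the convex integrand. Hence
`h x ≤ h (x + n) ≤ 1 / (2 (x + n)) → 0`.
-/

open Real Filter Topology

local notation "ψ" => deriv fun y : ℝ => Real.log (Real.Gamma y)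

namespace Real

theorem log_le_half_sub_inv {y : ℝ} (hy : 1 ≤ y) : log y ≤ (y - y⁻¹) / 2 :=
  sinh_log (by positivity : 0 < y) ▸ self_le_sinh_iff.2 (log_nonneg hy)

theorem log_add_one_sub_log_le {t : ℝ} (ht : 0 < t) :
    log (t + 1) - log t ≤ (t⁻¹ + (t + 1)⁻¹) / 2 := by
  have hratio : 1 ≤ (t + 1) / t := by rw [le_div_iff₀ ht]; linarith
  calc log (t + 1) - log t = log ((t + 1) / t) := (log_div (by positivity) ht.ne').symm
    _ ≤ ((t + 1) / t - ((t + 1) / t)⁻¹) / 2 := log_le_half_sub_inv hratio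
    _ = (t⁻¹ + (t + 1)⁻¹) / 2 := by field_simp; ring

theorem differentiableAt_log_Gamma {y : ℝ} (hy : 0 < y) :
    DifferentiableAt ℝ (fun y => log (Gamma y)) y :=
  (differentiableAt_Gamma fun m => by linarith [(Nat.cast_nonneg m : (0 : ℝ) ≤ m)]).log
    (Gamma_pos_of_pos hy).ne'

theorem deriv_log_Gamma_add_one {y : ℝ} (hy : 0 < y) : ψ (y + 1) = ψ y + y⁻¹ := by
  have hshift : HasDerivAt (fun z => log (Gamma (z + 1))) (ψ (y + 1)) y :=
    (differentiableAt_log_Gamma (by linarith)).hasDerivAt.comp_add_const y 1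
  have hfeq : (fun z => log (Gamma (z + 1))) =ᶠ[𝓝 y] fun z => log z + log (Gamma z) := by
    filter_upwards [eventually_gt_nhds hy] with z hz
    rw [Gamma_add_one hz.ne', log_mul hz.ne' (Gamma_pos_of_pos hz).ne']
  rw [hshift.unique
    (((hasDerivAt_log hy.ne').add (differentiableAt_log_Gamma hy).hasDerivAt).congr_of_eventuallyEq
      hfeq), add_comm]

theorem slope_log_Gamma {y : ℝ} (hy : 0 < y) : slope (log ∘ Gamma) y (y + 1) = log y := by
  rw [slope_def_field, Function.comp_apply, Function.comp_apply, Gamma_add_one hy.ne',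
    log_mul hy.ne' (Gamma_pos_of_pos hy).ne']
  ring

theorem deriv_log_Gamma_le_log {y : ℝ} (hy : 0 < y) : ψ y ≤ log y :=
  slope_log_Gamma hy ▸ convexOn_log_Gamma.deriv_le_slope hy (by simp; linarith) (by linarith)
    (differentiableAt_log_Gamma hy)

theorem log_le_deriv_log_Gamma_add_one {y : ℝ} (hy : 0 < y) : log y ≤ ψ (y + 1) :=
  slope_log_Gamma hy ▸ convexOn_log_Gamma.slope_le_deriv hy (by simp; linarith) (by linarith)
    (differentiableAt_log_Gamma (by linarith))

theorem log_sub_inv_le_deriv_log_Gamma {x : ℝ} (hx : 0 < x) : log x - 1 / x ≤ ψ x := by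
  linarith [log_le_deriv_log_Gamma_add_one hx, deriv_log_Gamma_add_one hx, one_div x]

theorem deriv_log_Gamma_le_log_sub_inv_two_mul {x : ℝ} (hx : 0 < x) :
    ψ x ≤ log x - 1 / (2 * x) := by
  set h : ℝ → ℝ := fun y => ψ y - log y + (2 * y)⁻¹
  have hstep {y : ℝ} (hy : 0 < y) : h y ≤ h (y + 1) := by
    have := log_add_one_sub_log_le hy
    simp only [h, deriv_log_Gamma_add_one hy, mul_inv]
    linarith
  have hbound (n : ℕ) : h x ≤ (2 * (x + n))⁻¹ := by
    have hmono : h x ≤ h (x + n) := by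
      induction n with
      | zero => simp
      | succ n ih => exact ih.trans (by push_cast; rw [← add_assoc]; exact hstep (by positivity))
    linarith [deriv_log_Gamma_le_log (by positivity : 0 < x + n)]
  have hlim : Tendsto (fun n : ℕ => (2 * (x + n))⁻¹) atTop (𝓝 0) :=
    tendsto_inv_atTop_zero.comp
      ((tendsto_atTop_add_const_left _ x tendsto_natCast_atTop_atTop).const_mul_atTop two_pos)
  have : h x ≤ 0 := ge_of_tendsto' hlim hbound
  simp only [h] at this
  linarith [one_div (2 * x)]

end Real

/-- Two-sided bounds on the digamma function `ψ = (log Γ)'`: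
`log x - 1/x ≤ ψ(x) ≤ log x - 1/(2x)` for all `x > 0`. -/
theorem digamma_bounds (x : ℝ) (hx : 0 < x) :
    Real.log x - 1 / x ≤ deriv (fun y : ℝ => Real.log (Real.Gamma y)) x ∧
      deriv (fun y : ℝ => Real.log (Real.Gamma y)) x ≤ Real.log x - 1 / (2 * x) :=
  ⟨Real.log_sub_inv_le_deriv_log_Gamma hx, Real.deriv_log_Gamma_le_log_sub_inv_two_mul hx⟩
end
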